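/- arXiv:2209.14390 — 2 statements merged into one kernel-verified Lean document; each statement's English description precedes it below -/
import Mathlib

section
/- With the momentum sequence above (v_k = β v_{k−1} − η g_{k−1}, x_k = x_{k−1} + v_k, v₀ = 0, z_k = (1/(1−β))x_k − (β/(1−β))x_{k−1}, z₀ = x₀), for every K ≥ 1: ∑_{k=0}^{K−1} ‖z_k − x_k‖² ≤ (η²β²/(1−β)⁴) ∑_{k=0}^{K−1} ‖g_k‖². -/
/-!
Writing `z_k - x_k = (β/(1-β)) v_k`, it suffices to bound `∑ ‖v_k‖²`. The momentum update is the
convex combination `v_{k+1} = β v_k + (1-β) (-(η/(1-β)) g_k)`, so convexity of `‖·‖²` gives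
`‖v_{k+1}‖² ≤ β ‖v_k‖² + η²/(1-β) ‖g_k‖²`; summing this over `k < K` and using `v_0 = 0`
yields `(1-β) ∑ ‖v_k‖² ≤ η²/(1-β) ∑ ‖g_k‖²`.
-/

open Finset

lemma one_sub_mul_sum_range_le_of_succ_le {a b : ℕ → ℝ} {β : ℝ} (ha0 : a 0 = 0)
    (ha : ∀ k, 0 ≤ a k) (hab : ∀ k, a (k + 1) ≤ β * a k + b k) (K : ℕ) :
    (1 - β) * ∑ k ∈ range K, a k ≤ ∑ k ∈ range K, b k := by
  have hshift : ∑ k ∈ range K, a k + a K = ∑ k ∈ range K, a (k + 1) := by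
    rw [← sum_range_succ, sum_range_succ', ha0, add_zero]
  have hsum : ∑ k ∈ range K, a (k + 1) ≤ β * ∑ k ∈ range K, a k + ∑ k ∈ range K, b k := by
    rw [mul_sum, ← sum_add_distrib]
    exact sum_le_sum fun k _ => hab k
  linarith [ha K]

section Momentum

variable {E : Type*} [NormedAddCommGroup E] [NormedSpace ℝ E]

lemma norm_smul_add_one_sub_smul_sq_le {β : ℝ} (hβ0 : 0 ≤ β) (hβ1 : β ≤ 1) (a c : E) :
    ‖β • a + (1 - β) • c‖ ^ 2 ≤ β * ‖a‖ ^ 2 + (1 - β) * ‖c‖ ^ 2 := by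
  have htri : ‖β • a + (1 - β) • c‖ ≤ β * ‖a‖ + (1 - β) * ‖c‖ := by
    refine (norm_add_le _ _).trans_eq ?_
    rw [norm_smul, norm_smul, Real.norm_of_nonneg hβ0, Real.norm_of_nonneg (sub_nonneg.2 hβ1)]
  calc ‖β • a + (1 - β) • c‖ ^ 2 ≤ (β * ‖a‖ + (1 - β) * ‖c‖) ^ 2 :=
        pow_le_pow_left₀ (norm_nonneg _) htri 2
    _ = β * ‖a‖ ^ 2 + (1 - β) * ‖c‖ ^ 2 - β * (1 - β) * (‖a‖ - ‖c‖) ^ 2 := by ring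
    _ ≤ β * ‖a‖ ^ 2 + (1 - β) * ‖c‖ ^ 2 := by
        have : 0 ≤ β * (1 - β) := mul_nonneg hβ0 (by linarith)
        nlinarith [sq_nonneg (‖a‖ - ‖c‖)]

lemma norm_sq_momentum_le {β η : ℝ} (hβ0 : 0 ≤ β) (hβ1 : β < 1) (v g : E) :
    ‖β • v - η • g‖ ^ 2 ≤ β * ‖v‖ ^ 2 + η ^ 2 / (1 - β) * ‖g‖ ^ 2 := by
  have hβ : 1 - β ≠ 0 := by linarith
  have hcomb : β • v - η • g = β • v + (1 - β) • (-(η / (1 - β)) • g) := by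
    rw [smul_smul, mul_neg, mul_div_cancel₀ _ hβ, neg_smul, sub_eq_add_neg]
  have hg : (1 - β) * ‖-(η / (1 - β)) • g‖ ^ 2 = η ^ 2 / (1 - β) * ‖g‖ ^ 2 := by
    rw [norm_smul, Real.norm_eq_abs, mul_pow, sq_abs]
    field_simp
  rw [hcomb, ← hg]
  exact norm_smul_add_one_sub_smul_sq_le hβ0 hβ1.le _ _

lemma sum_range_norm_sq_momentum_le {β η : ℝ} (hβ0 : 0 ≤ β) (hβ1 : β < 1) {v g : ℕ → E}
    (hv0 : v 0 = 0) (hv : ∀ k, v (k + 1) = β • v k - η • g k) (K : ℕ) :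
    ∑ k ∈ range K, ‖v k‖ ^ 2 ≤ η ^ 2 / (1 - β) ^ 2 * ∑ k ∈ range K, ‖g k‖ ^ 2 := by
  have hβ : 0 < 1 - β := by linarith
  have h := one_sub_mul_sum_range_le_of_succ_le (a := fun k => ‖v k‖ ^ 2)
    (b := fun k => η ^ 2 / (1 - β) * ‖g k‖ ^ 2) (by simp [hv0]) (fun k => by positivity)
    (fun k => hv k ▸ norm_sq_momentum_le hβ0 hβ1 (v k) (g k)) K
  rw [← mul_sum] at h
  calc ∑ k ∈ range K, ‖v k‖ ^ 2 ≤ (η ^ 2 / (1 - β) * ∑ k ∈ range K, ‖g k‖ ^ 2) / (1 - β) := by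
        rw [le_div_iff₀ hβ]
        linarith
    _ = η ^ 2 / (1 - β) ^ 2 * ∑ k ∈ range K, ‖g k‖ ^ 2 := by
        field_simp

lemma sub_eq_smul_momentum {β : ℝ} (hβ : β ≠ 1) {x v z : ℕ → E} (hv0 : v 0 = 0)
    (hx : ∀ k, x (k + 1) = x k + v (k + 1)) (hz0 : z 0 = x 0)
    (hz : ∀ k, z (k + 1) = (1 / (1 - β)) • x (k + 1) - (β / (1 - β)) • x k) (k : ℕ) :
    z k - x k = (β / (1 - β)) • v k := by
  have hβ' : 1 - β ≠ 0 := sub_ne_zero.2 hβ.symm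
  cases k with
  | zero => simp [hz0, hv0]
  | succ n =>
    have h1 : 1 / (1 - β) = β / (1 - β) + 1 := by field_simp; ring
    rw [hz, hx, h1]
    module

end Momentum

theorem stmt_14_general {d : ℕ} (β η : ℝ) (hβ0 : 0 ≤ β) (hβ1 : β < 1)
    (g x v z : ℕ → EuclideanSpace ℝ (Fin d))
    (hv0 : v 0 = 0)
    (hv : ∀ k, v (k + 1) = β • v k - η • g k)
    (hx : ∀ k, x (k + 1) = x k + v (k + 1))
    (hz0 : z 0 = x 0)
    (hz : ∀ k, z (k + 1) = (1 / (1 - β)) • x (k + 1) - (β / (1 - β)) • x k)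
    (K : ℕ) :
    ∑ k ∈ Finset.range K, ‖z k - x k‖ ^ 2
      ≤ η ^ 2 * β ^ 2 / (1 - β) ^ 4 * ∑ k ∈ Finset.range K, ‖g k‖ ^ 2 := by
  have hβ : 0 < 1 - β := by linarith
  calc ∑ k ∈ range K, ‖z k - x k‖ ^ 2 = β ^ 2 / (1 - β) ^ 2 * ∑ k ∈ range K, ‖v k‖ ^ 2 := by
        rw [mul_sum]
        refine sum_congr rfl fun k _ => ?_
        rw [sub_eq_smul_momentum hβ1.ne hv0 hx hz0 hz, norm_smul, mul_pow, Real.norm_eq_abs,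
          sq_abs, div_pow]
    _ ≤ β ^ 2 / (1 - β) ^ 2 * (η ^ 2 / (1 - β) ^ 2 * ∑ k ∈ range K, ‖g k‖ ^ 2) :=
        mul_le_mul_of_nonneg_left (sum_range_norm_sq_momentum_le hβ0 hβ1 hv0 hv K)
          (by positivity)
    _ = η ^ 2 * β ^ 2 / (1 - β) ^ 4 * ∑ k ∈ range K, ‖g k‖ ^ 2 := by
        field_simp

/-- With the momentum updates `v_{k+1} = β v_k − η g_k`, `x_{k+1} = x_k + v_{k+1}`,
`v₀ = 0`, and the auxiliary sequence `z₀ = x₀`,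
`z_{k+1} = (1/(1−β)) x_{k+1} − (β/(1−β)) x_k`, for every `K ≥ 1`:
`∑_{k=0}^{K−1} ‖z_k − x_k‖² ≤ (η²β²/(1−β)⁴) ∑_{k=0}^{K−1} ‖g_k‖²`. -/
theorem stmt_14 {d : ℕ} (β η : ℝ) (hβ0 : 0 ≤ β) (hβ1 : β < 1) (hη : 0 < η)
    (g x v z : ℕ → EuclideanSpace ℝ (Fin d))
    (hv0 : v 0 = 0)
    (hv : ∀ k, v (k + 1) = β • v k - η • g k)
    (hx : ∀ k, x (k + 1) = x k + v (k + 1))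
    (hz0 : z 0 = x 0)
    (hz : ∀ k, z (k + 1) = (1 / (1 - β)) • x (k + 1) - (β / (1 - β)) • x k)
    (K : ℕ) (hK : 1 ≤ K) :
    ∑ k ∈ Finset.range K, ‖z k - x k‖ ^ 2
      ≤ η ^ 2 * β ^ 2 / (1 - β) ^ 4 * ∑ k ∈ Finset.range K, ‖g k‖ ^ 2 :=
  stmt_14_general β η hβ0 hβ1 g x v z hv0 hv hx hz0 hz K
end

section
/- (Lemma A.3 matrix form) Under the same assumptions, let G̃ and G be the d×N matrices with columns g̃^i = ∑_j w_{ij}∇F_j(x;d^j) and g^i = ∇F_i(x;d^i) respectively. Then E[‖G̃ − G‖_F²] ≤ 4N(σ² + ζ²). -/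
open MeasureTheory Finset

/-! Column `i` of `G̃ − G` is `∑ⱼ cⱼ Gⱼ` with `cⱼ = w_{ij} − δ_{ij}`, so `∑ⱼ cⱼ = 0` and
`∑ⱼ |cⱼ| ≤ 2`. Because the coefficients sum to zero, `∑ⱼ cⱼ Gⱼ` is the centred noise
`∑ⱼ cⱼ (Gⱼ − hⱼ)` plus the constant `∑ⱼ cⱼ (hⱼ − h̄)`. The cross term has mean zero, and the
weighted Cauchy–Schwarz inequality bounds the two squares by `(∑ⱼ |cⱼ|)² σ²` and
`(∑ⱼ |cⱼ|)² ζ²`, so each column contributes at most `4 (σ² + ζ²)`. -/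

lemma norm_sum_smul_sq_le {ι E : Type*} [SeminormedAddCommGroup E] [NormedSpace ℝ E]
    (s : Finset ι) (c : ι → ℝ) (v : ι → E) :
    ‖∑ j ∈ s, c j • v j‖ ^ 2 ≤ (∑ j ∈ s, |c j|) * ∑ j ∈ s, |c j| * ‖v j‖ ^ 2 :=
  calc ‖∑ j ∈ s, c j • v j‖ ^ 2 ≤ (∑ j ∈ s, |c j| * ‖v j‖) ^ 2 := by
        gcongr
        exact (norm_sum_le _ _).trans_eq (by simp only [norm_smul, Real.norm_eq_abs])
    _ ≤ _ := sum_sq_le_sum_mul_sum_of_sq_le_mul s (fun _ _ => abs_nonneg _)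
        (fun _ _ => by positivity) (fun _ _ => le_of_eq (by ring))

section CoefficientsOfDifference

variable {ι : Type*} [Fintype ι] [DecidableEq ι] {p : ι → ℝ}

lemma sum_sub_ite_eq_zero (hp : ∑ j, p j = 1) (i : ι) :
    ∑ j, (p j - if j = i then 1 else 0) = 0 := by
  simp [sum_sub_distrib, hp]

lemma sum_abs_sub_ite_le_two (hp0 : ∀ j, 0 ≤ p j) (hp : ∑ j, p j = 1) (i : ι) :
    ∑ j, |p j - if j = i then 1 else 0| ≤ 2 :=
  calc ∑ j, |p j - if j = i then 1 else 0| ≤ ∑ j, (p j + if j = i then 1 else 0) := by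
        refine sum_le_sum fun j _ => (abs_sub _ _).trans_eq ?_
        rw [abs_of_nonneg (hp0 j), abs_of_nonneg (by split_ifs <;> norm_num)]
    _ = 2 := by rw [sum_add_distrib, hp, sum_ite_eq']; norm_num

lemma sum_smul_sub_eq_sum_sub_ite_smul {M : Type*} [AddCommGroup M] [Module ℝ M]
    (p : ι → ℝ) (v : ι → M) (i : ι) :
    ∑ j, p j • v j - v i = ∑ j, (p j - if j = i then 1 else 0) • v j := by
  simp [sub_smul, sum_sub_distrib, ite_smul]

end CoefficientsOfDifference

section SecondMoments

variable {Ω E : Type*} {mΩ : MeasurableSpace Ω} {μ : Measure Ω}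
  [NormedAddCommGroup E] [InnerProductSpace ℝ E]

lemma integral_norm_add_const_sq [CompleteSpace E] [IsProbabilityMeasure μ] {X : Ω → E}
    (hX : MemLp X 2 μ) (hX0 : ∫ ω, X ω ∂μ = 0) (y : E) :
    ∫ ω, ‖X ω + y‖ ^ 2 ∂μ = ∫ ω, ‖X ω‖ ^ 2 ∂μ + ‖y‖ ^ 2 := by
  have hXint : Integrable X μ := hX.integrable one_le_two
  have hsq : Integrable (fun ω => ‖X ω‖ ^ 2) μ := hX.norm.integrable_sq
  have hcross : Integrable (fun ω => 2 * inner ℝ y (X ω)) μ := (hXint.const_inner y).const_mul 2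
  have hcross0 : ∫ ω, inner ℝ y (X ω) ∂μ = 0 := by
    rw [integral_inner hXint, hX0, inner_zero_right]
  simp_rw [norm_add_sq_real, real_inner_comm y]
  rw [integral_add (f := fun ω => ‖X ω‖ ^ 2 + 2 * inner ℝ y (X ω)) (hsq.add hcross)
      (integrable_const _), integral_add hsq hcross, integral_const_mul, hcross0]
  simp

lemma integral_norm_sum_smul_sq_le {ι : Type*} (s : Finset ι) (c : ι → ℝ) {F : ι → Ω → E}
    (hF : ∀ j ∈ s, MemLp (F j) 2 μ) :
    ∫ ω, ‖∑ j ∈ s, c j • F j ω‖ ^ 2 ∂μ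
      ≤ (∑ j ∈ s, |c j|) * ∑ j ∈ s, |c j| * ∫ ω, ‖F j ω‖ ^ 2 ∂μ := by
  have hsq : ∀ j ∈ s, Integrable (fun ω => |c j| * ‖F j ω‖ ^ 2) μ := fun j hj =>
    (hF j hj).norm.integrable_sq.const_mul _
  calc ∫ ω, ‖∑ j ∈ s, c j • F j ω‖ ^ 2 ∂μ
        ≤ ∫ ω, (∑ j ∈ s, |c j|) * ∑ j ∈ s, |c j| * ‖F j ω‖ ^ 2 ∂μ :=
      integral_mono_of_nonneg (ae_of_all _ fun _ => by positivity)
        ((integrable_finsetSum s hsq).const_mul _)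
        (ae_of_all _ fun ω => norm_sum_smul_sq_le s c fun j => F j ω)
    _ = _ := by
      rw [integral_const_mul, integral_finsetSum s hsq]
      simp_rw [integral_const_mul]

lemma integral_norm_sum_smul_sq_le_of_sum_eq_zero [CompleteSpace E] [IsProbabilityMeasure μ]
    {ι : Type*} [Fintype ι] {G : ι → Ω → E} {h : ι → E} (m : E) {σ ζ : ℝ} (c : ι → ℝ)
    (hc : ∑ j, c j = 0) (hmem : ∀ j, MemLp (G j) 2 μ) (hmean : ∀ j, ∫ ω, G j ω ∂μ = h j)
    (hvar : ∀ j, ∫ ω, ‖G j ω - h j‖ ^ 2 ∂μ ≤ σ ^ 2) (hhet : ∀ j, ‖h j - m‖ ^ 2 ≤ ζ ^ 2) :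
    ∫ ω, ‖∑ j, c j • G j ω‖ ^ 2 ∂μ ≤ (∑ j, |c j|) ^ 2 * (σ ^ 2 + ζ ^ 2) := by
  have hsplit : ∀ ω, ∑ j, c j • G j ω
      = ∑ j, c j • (G j ω - h j) + ∑ j, c j • (h j - m) := fun ω => by
    simp only [smul_sub, sum_sub_distrib, ← sum_smul, hc, zero_smul, sub_zero, sub_add_cancel]
  have hcent : ∀ j ∈ univ, MemLp (fun ω => G j ω - h j) 2 μ := fun j _ =>
    (hmem j).sub (memLp_const _)
  have hnoise_mem : MemLp (fun ω => ∑ j, c j • (G j ω - h j)) 2 μ :=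
    memLp_finsetSum _ fun j hj => (hcent j hj).const_smul (c j)
  have hnoise_mean : ∫ ω, ∑ j, c j • (G j ω - h j) ∂μ = 0 := by
    rw [integral_finsetSum (f := fun j ω => c j • (G j ω - h j)) _ fun j hj =>
      ((hcent j hj).integrable one_le_two).smul (c j)]
    refine sum_eq_zero fun j _ => ?_
    rw [integral_smul, integral_sub ((hmem j).integrable one_le_two) (integrable_const _),
      hmean j, integral_const, probReal_univ, one_smul, sub_self, smul_zero]
  have hnoise : ∫ ω, ‖∑ j, c j • (G j ω - h j)‖ ^ 2 ∂μ ≤ (∑ j, |c j|) ^ 2 * σ ^ 2 :=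
    calc _ ≤ (∑ j, |c j|) * ∑ j, |c j| * ∫ ω, ‖G j ω - h j‖ ^ 2 ∂μ :=
          integral_norm_sum_smul_sq_le _ c hcent
      _ ≤ (∑ j, |c j|) * ∑ j, |c j| * σ ^ 2 := by gcongr with j; exact hvar j
      _ = _ := by rw [← sum_mul]; ring
  have hdrift : ‖∑ j, c j • (h j - m)‖ ^ 2 ≤ (∑ j, |c j|) ^ 2 * ζ ^ 2 :=
    calc _ ≤ (∑ j, |c j|) * ∑ j, |c j| * ‖h j - m‖ ^ 2 := norm_sum_smul_sq_le _ c _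
      _ ≤ (∑ j, |c j|) * ∑ j, |c j| * ζ ^ 2 := by gcongr (_ * ∑ j, _ * ?_) with j; exact hhet j
      _ = _ := by rw [← sum_mul]; ring
  simp_rw [hsplit]
  rw [integral_norm_add_const_sq hnoise_mem hnoise_mean]
  linarith

end SecondMoments

/-- `G j` is the stochastic gradient `∇F_j(x; dʲ)` and `h j = ∇f_j(x)`; the squared Frobenius
norm of `G̃ − G` is written as the sum of the squared Euclidean norms of its columns. -/
theorem stmt_16_general {Ω : Type*} {mΩ : MeasurableSpace Ω} (μ : Measure Ω)
    [IsProbabilityMeasure μ] {d N : ℕ} (σ ζ : ℝ)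
    (G : Fin N → Ω → EuclideanSpace ℝ (Fin d))
    (h : Fin N → EuclideanSpace ℝ (Fin d))
    (w : Fin N → Fin N → ℝ)
    (hw_nonneg : ∀ i j, 0 ≤ w i j)
    (hw_row : ∀ i, ∑ j, w i j = 1)
    (hmem : ∀ i, MemLp (G i) 2 μ)
    (hmean : ∀ i, ∫ ω, G i ω ∂μ = h i)
    (hvar : ∀ i, ∫ ω, ‖G i ω - h i‖ ^ 2 ∂μ ≤ σ ^ 2)
    (hhet : ∀ i, ‖h i - (1 / N : ℝ) • ∑ j, h j‖ ^ 2 ≤ ζ ^ 2) :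
    ∫ ω, ∑ i, ‖(∑ j, w i j • G j ω) - G i ω‖ ^ 2 ∂μ
      ≤ 4 * N * (σ ^ 2 + ζ ^ 2) := by
  have hcol : ∀ i, ∫ ω, ‖(∑ j, w i j • G j ω) - G i ω‖ ^ 2 ∂μ ≤ 4 * (σ ^ 2 + ζ ^ 2) := by
    intro i
    have hS : (∑ j, |w i j - if j = i then 1 else 0|) ^ 2 ≤ 2 ^ 2 :=
      pow_le_pow_left₀ (by positivity) (sum_abs_sub_ite_le_two (hw_nonneg i) (hw_row i) i) 2
    simp_rw [sum_smul_sub_eq_sum_sub_ite_smul]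
    refine (integral_norm_sum_smul_sq_le_of_sum_eq_zero _ _ (sum_sub_ite_eq_zero (hw_row i) i)
      hmem hmean hvar hhet).trans ?_
    exact (mul_le_mul_of_nonneg_right hS (by positivity)).trans_eq (by norm_num)
  have hint : ∀ i ∈ univ, Integrable (fun ω => ‖(∑ j, w i j • G j ω) - G i ω‖ ^ 2) μ :=
    fun i _ => ((memLp_finsetSum _ fun j _ => (hmem j).const_smul (w i j)).sub
      (hmem i)).norm.integrable_sq
  rw [integral_finsetSum _ hint]
  calc ∑ i, ∫ ω, ‖(∑ j, w i j • G j ω) - G i ω‖ ^ 2 ∂μ ≤ ∑ _i : Fin N, 4 * (σ ^ 2 + ζ ^ 2) :=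
        sum_le_sum fun i _ => hcol i
    _ = 4 * N * (σ ^ 2 + ζ ^ 2) := by
        rw [sum_const, card_univ, Fintype.card_fin, nsmul_eq_mul]
        ring

/-- Lemma A.3 (matrix form).  Under the bounded-variance assumptions, with the
NGC updates `g̃ⁱ = ∑_j w i j • G j` forming the columns of `G̃` and the
stochastic gradients `Gⁱ` the columns of `G`,
`E[‖G̃ − G‖_F²] ≤ 4N(σ² + ζ²)` (the squared Frobenius norm being the sum of
the squared Euclidean norms of the columns). -/
theorem stmt_16 {Ω : Type*} {mΩ : MeasurableSpace Ω} (μ : Measure Ω)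
    [IsProbabilityMeasure μ] {d N : ℕ} (hN : 0 < N) (σ ζ : ℝ)
    (G : Fin N → Ω → EuclideanSpace ℝ (Fin d))
    (h : Fin N → EuclideanSpace ℝ (Fin d))
    (w : Fin N → Fin N → ℝ)
    (hw_nonneg : ∀ i j, 0 ≤ w i j)
    (hw_row : ∀ i, ∑ j, w i j = 1)
    (hw_col : ∀ j, ∑ i, w i j = 1)
    (hind : ProbabilityTheory.iIndepFun G μ)
    (hmem : ∀ i, MemLp (G i) 2 μ)
    (hmean : ∀ i, ∫ ω, G i ω ∂μ = h i)
    (hvar : ∀ i, ∫ ω, ‖G i ω - h i‖ ^ 2 ∂μ ≤ σ ^ 2)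
    (hhet : ∀ i, ‖h i - (1 / N : ℝ) • ∑ j, h j‖ ^ 2 ≤ ζ ^ 2) :
    ∫ ω, ∑ i, ‖(∑ j, w i j • G j ω) - G i ω‖ ^ 2 ∂μ
      ≤ 4 * N * (σ ^ 2 + ζ ^ 2) :=
  stmt_16_general (mΩ := mΩ) μ σ ζ G h w hw_nonneg hw_row hmem hmean hvar hhet
end
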